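/- Let K = (T, A)_ω be an ALCHIO weighted knowledge base, I an interpretation, 𝒞 the closure of the set of concepts occurring in T under negation and subconcepts, tp_I(d) = {C ∈ 𝒞 | d ∈ C^I}, ρ the map sending d ∈ Δ^I to d if d ∈ Ind(K) and to w_{tp_I(d)} otherwise, and J = ρ(I) the image interpretation. Then ω(J) ≤ ω(I). -/

import Mathlib

namespace DL

/-! ### Syntax -/

abbrev IndName := ℕ
abbrev CName := ℕ
abbrev RName := ℕ

/-- Roles: role names and inverse roles. -/
inductive Role where
  | name : RName → Role
  | inv  : RName → Role
deriving DecidableEq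

/-- `ALCHIO` concepts. -/
inductive Concept where
  | top  : Concept
  | bot  : Concept
  | atom : CName → Concept
  | nom  : IndName → Concept
  | neg  : Concept → Concept
  | conj : Concept → Concept → Concept
  | ex   : Role → Concept → Concept
deriving DecidableEq

/-- TBox axioms: concept inclusions and role inclusions. -/
inductive Axiom where
  | ci : Concept → Concept → Axiom
  | ri : Role → Role → Axiom
deriving DecidableEq

/-- ABox assertions. -/
inductive Assertion where
  | ca : CName → IndName → Assertion
  | ra : RName → IndName → IndName → Assertion
deriving DecidableEq

/-! ### Interpretations -/

/-- A DL interpretation with domain a subset of a universe `U`.  Individual names are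
interpreted via `indI` (under the standard names assumption, the individual names of the
ABox under consideration are interpreted "as themselves", i.e. injectively). -/
structure Interp (U : Type) where
  dom : Set U
  indI : IndName → U
  cI : CName → Set U
  rI : RName → Set (U × U)
  cI_sub : ∀ A, cI A ⊆ dom
  rI_sub : ∀ r p, p ∈ rI r → p.1 ∈ dom ∧ p.2 ∈ dom

variable {U : Type}

/-- Every individual name denotes an element of the domain. -/
def Interp.Proper (I : Interp U) : Prop := ∀ a, I.indI a ∈ I.dom

def Role.interp (I : Interp U) : Role → Set (U × U)
  | Role.name r => I.rI r
  | Role.inv r  => {p | (p.2, p.1) ∈ I.rI r}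

def Concept.interp (I : Interp U) : Concept → Set U
  | Concept.top => I.dom
  | Concept.bot => ∅
  | Concept.atom A => I.cI A
  | Concept.nom a => {I.indI a} ∩ I.dom
  | Concept.neg C => I.dom \ Concept.interp I C
  | Concept.conj C D => Concept.interp I C ∩ Concept.interp I D
  | Concept.ex r C => {d | ∃ e, (d, e) ∈ Role.interp I r ∧ e ∈ Concept.interp I C}

def Assertion.sat (I : Interp U) : Assertion → Prop
  | Assertion.ca A a => I.indI a ∈ I.cI A
  | Assertion.ra r a b => (I.indI a, I.indI b) ∈ I.rI r

/-! ### Violations and cost -/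

/-- Violations of a concept inclusion `C ⊑ D`. -/
def vioCI (I : Interp U) (C D : Concept) : Set U :=
  Concept.interp I C \ Concept.interp I D

/-- Violations of a role inclusion `r ⊑ s`. -/
def vioRI (I : Interp U) (r s : Role) : Set (U × U) :=
  Role.interp I r \ Role.interp I s

/-- The number of violations of an axiom. -/
noncomputable def Axiom.vioCount (I : Interp U) : Axiom → ℕ∞
  | Axiom.ci C D => (vioCI I C D).encard
  | Axiom.ri r s => (vioRI I r s).encard

open Classical in
/-- The cost of an interpretation w.r.t. a weighted knowledge base `(T, A)` with weight
functions `wT` (on TBox axioms) and `wA` (on ABox assertions). -/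
noncomputable def cost (T : Finset Axiom) (A : Finset Assertion)
    (wT : Axiom → ℕ∞) (wA : Assertion → ℕ∞) (I : Interp U) : ℕ∞ :=
  (∑ τ ∈ T, wT τ * Axiom.vioCount I τ) +
    ∑ α ∈ A, (if Assertion.sat I α then 0 else wA α)

/-! ### Queries -/

inductive Term where
  | var : ℕ → Term
  | ind : IndName → Term
deriving DecidableEq

inductive QAtom where
  | ca : CName → Term → QAtom
  | ra : RName → Term → Term → QAtom
deriving DecidableEq

/-- A Boolean conjunctive query: a finite set of atoms, all of whose variables are
(implicitly) existentially quantified. -/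
abbrev BCQ := Finset QAtom

def Term.eval (I : Interp U) (π : ℕ → U) : Term → U
  | Term.var v => π v
  | Term.ind a => I.indI a

def QAtom.sat (I : Interp U) (π : ℕ → U) : QAtom → Prop
  | QAtom.ca A t => Term.eval I π t ∈ I.cI A
  | QAtom.ra r t t' => (Term.eval I π t, Term.eval I π t') ∈ I.rI r

/-- Satisfaction of a BCQ in an interpretation. -/
def satQ (I : Interp U) (q : BCQ) : Prop :=
  ∃ π : ℕ → U, (∀ v, π v ∈ I.dom) ∧ ∀ a ∈ q, QAtom.sat I π a

/-- An instance query is a BCQ with a single atom. -/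
def IsIQ (q : BCQ) : Prop := ∃ a : QAtom, q = {a}

/-! ### Cost-based semantics -/

/-- `k`-satisfiability: some interpretation has cost at most `k`. -/
def ksat (T : Finset Axiom) (A : Finset Assertion)
    (wT : Axiom → ℕ∞) (wA : Assertion → ℕ∞) (k : ℕ) : Prop :=
  ∃ (U : Type) (I : Interp U), I.Proper ∧ cost T A wT wA I ≤ (k : ℕ∞)

/-- `K ⊨ₚᵏ q`: some interpretation of cost at most `k` satisfies `q`. -/
def satP (T : Finset Axiom) (A : Finset Assertion)
    (wT : Axiom → ℕ∞) (wA : Assertion → ℕ∞) (k : ℕ) (q : BCQ) : Prop :=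
  ∃ (U : Type) (I : Interp U), I.Proper ∧ cost T A wT wA I ≤ (k : ℕ∞) ∧ satQ I q

/-- `K ⊨꜀ᵏ q`: every interpretation of cost at most `k` satisfies `q`. -/
def satC (T : Finset Axiom) (A : Finset Assertion)
    (wT : Axiom → ℕ∞) (wA : Assertion → ℕ∞) (k : ℕ) (q : BCQ) : Prop :=
  ∀ (U : Type) (I : Interp U), I.Proper → cost T A wT wA I ≤ (k : ℕ∞) → satQ I q

/-- The optimal cost of a weighted knowledge base. -/
noncomputable def optCost (T : Finset Axiom) (A : Finset Assertion)
    (wT : Axiom → ℕ∞) (wA : Assertion → ℕ∞) : ℕ∞ :=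
  sInf {c : ℕ∞ | ∃ (U : Type) (I : Interp U), I.Proper ∧ cost T A wT wA I = c}

/-- `K ⊨ₚᵒᵖᵗ q`: some interpretation of optimal cost satisfies `q`. -/
noncomputable def satPopt (T : Finset Axiom) (A : Finset Assertion)
    (wT : Axiom → ℕ∞) (wA : Assertion → ℕ∞) (q : BCQ) : Prop :=
  ∃ (U : Type) (I : Interp U), I.Proper ∧ cost T A wT wA I = optCost T A wT wA ∧ satQ I q

/-- `K ⊨꜀ᵒᵖᵗ q`: every interpretation of optimal cost satisfies `q`. -/
noncomputable def satCopt (T : Finset Axiom) (A : Finset Assertion)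
    (wT : Axiom → ℕ∞) (wA : Assertion → ℕ∞) (q : BCQ) : Prop :=
  ∀ (U : Type) (I : Interp U), I.Proper → cost T A wT wA I = optCost T A wT wA → satQ I q

/-! ### Occurrences of symbols -/

def Role.base : Role → RName
  | Role.name r => r
  | Role.inv r => r

def Concept.cnames : Concept → Finset CName
  | Concept.atom A => {A}
  | Concept.neg C => C.cnames
  | Concept.conj C D => C.cnames ∪ D.cnames
  | Concept.ex _ C => C.cnames
  | _ => ∅

def Concept.rnames : Concept → Finset RName
  | Concept.neg C => C.rnames
  | Concept.conj C D => C.rnames ∪ D.rnames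
  | Concept.ex r C => insert r.base C.rnames
  | _ => ∅

def Concept.indNames : Concept → Finset IndName
  | Concept.nom a => {a}
  | Concept.neg C => C.indNames
  | Concept.conj C D => C.indNames ∪ D.indNames
  | Concept.ex _ C => C.indNames
  | _ => ∅

def Axiom.cnames : Axiom → Finset CName
  | Axiom.ci C D => C.cnames ∪ D.cnames
  | Axiom.ri _ _ => ∅

def Axiom.rnames : Axiom → Finset RName
  | Axiom.ci C D => C.rnames ∪ D.rnames
  | Axiom.ri r s => {r.base, s.base}

def Axiom.indNames : Axiom → Finset IndName
  | Axiom.ci C D => C.indNames ∪ D.indNames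
  | Axiom.ri _ _ => ∅

def Assertion.cnames : Assertion → Finset CName
  | Assertion.ca A _ => {A}
  | Assertion.ra _ _ _ => ∅

def Assertion.rnames : Assertion → Finset RName
  | Assertion.ca _ _ => ∅
  | Assertion.ra r _ _ => {r}

def Assertion.indNames : Assertion → Finset IndName
  | Assertion.ca _ a => {a}
  | Assertion.ra _ a b => {a, b}

/-- The individual names occurring in an ABox. -/
def aboxInds (A : Finset Assertion) : Finset IndName := A.biUnion Assertion.indNames

/-- The individual names occurring in a KB. -/
def kbInds (T : Finset Axiom) (A : Finset Assertion) : Finset IndName :=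
  T.biUnion Axiom.indNames ∪ aboxInds A

def Term.indNames : Term → Finset IndName
  | Term.var _ => ∅
  | Term.ind a => {a}

def QAtom.indNames : QAtom → Finset IndName
  | QAtom.ca _ t => t.indNames
  | QAtom.ra _ t t' => t.indNames ∪ t'.indNames

def QAtom.cnames : QAtom → Finset CName
  | QAtom.ca A _ => {A}
  | QAtom.ra _ _ _ => ∅

def qInds (q : BCQ) : Finset IndName := q.biUnion QAtom.indNames

def qCnames (q : BCQ) : Finset CName := q.biUnion QAtom.cnames

/-! ### Sizes -/

def Concept.size : Concept → ℕ
  | Concept.top => 1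
  | Concept.bot => 1
  | Concept.atom _ => 1
  | Concept.nom _ => 1
  | Concept.neg C => C.size + 1
  | Concept.conj C D => C.size + D.size + 1
  | Concept.ex _ C => C.size + 2

def Axiom.size : Axiom → ℕ
  | Axiom.ci C D => C.size + D.size + 1
  | Axiom.ri _ _ => 3

def Assertion.size : Assertion → ℕ
  | Assertion.ca _ _ => 2
  | Assertion.ra _ _ _ => 3

def tboxSize (T : Finset Axiom) : ℕ := ∑ τ ∈ T, τ.size

def aboxSize (A : Finset Assertion) : ℕ := ∑ α ∈ A, α.size

/-! ### DL-Lite fragments -/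

/-- Basic concepts: concept names and unqualified existential restrictions `∃r` (with a
possibly inverse role `r`), the latter rendered as `∃r.⊤`. -/
inductive IsBasic : Concept → Prop
  | atom (A : CName) : IsBasic (Concept.atom A)
  | ex (r : Role) : IsBasic (Concept.ex r Concept.top)

/-- A `DL-Lite_core` axiom: `B ⊑ C` or `B ⊓ C ⊑ ⊥` with `B, C` basic concepts. -/
def IsCoreAxiom (τ : Axiom) : Prop :=
  (∃ B C, τ = Axiom.ci B C ∧ IsBasic B ∧ IsBasic C) ∨
  (∃ B C, τ = Axiom.ci (Concept.conj B C) Concept.bot ∧ IsBasic B ∧ IsBasic C)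

def IsDLLiteCore (T : Finset Axiom) : Prop := ∀ τ ∈ T, IsCoreAxiom τ

/-- Concepts built from basic concepts using `¬`, `⊓` (and hence also `⊔`). -/
inductive IsBoolConcept : Concept → Prop
  | basic {C} : IsBasic C → IsBoolConcept C
  | neg {C} : IsBoolConcept C → IsBoolConcept (Concept.neg C)
  | conj {C D} : IsBoolConcept C → IsBoolConcept D → IsBoolConcept (Concept.conj C D)

/-- A `DL-Lite_bool^H` axiom: a concept inclusion between Boolean combinations of basic
concepts, or a role inclusion. -/
def IsBoolHAxiom (τ : Axiom) : Prop :=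
  (∃ C D, τ = Axiom.ci C D ∧ IsBoolConcept C ∧ IsBoolConcept D) ∨ (∃ r s, τ = Axiom.ri r s)

def IsDLLiteBoolH (T : Finset Axiom) : Prop := ∀ τ ∈ T, IsBoolHAxiom τ

/-- All subconcepts of a concept (including itself). -/
def Concept.subc : Concept → Finset Concept
  | Concept.top => {Concept.top}
  | Concept.bot => {Concept.bot}
  | Concept.atom A => {Concept.atom A}
  | Concept.nom a => {Concept.nom a}
  | Concept.neg C => insert (Concept.neg C) C.subc
  | Concept.conj C D => insert (Concept.conj C D) (C.subc ∪ D.subc)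
  | Concept.ex r C => insert (Concept.ex r C) C.subc

def Axiom.concepts : Axiom → Finset Concept
  | Axiom.ci C D => C.subc ∪ D.subc
  | Axiom.ri _ _ => ∅

/-- `𝒞`: the closure of the set of concepts occurring in `T` under negation and
subconcepts. -/
def clos (T : Finset Axiom) : Finset Concept :=
  T.biUnion Axiom.concepts ∪ (T.biUnion Axiom.concepts).image Concept.neg

/-- The type `tp_I(d) = { C ∈ 𝒞 ∣ d ∈ C^I }` of an element. -/
def tp (T : Finset Axiom) (I : Interp U) (d : U) : Set Concept :=
  {C | C ∈ clos T ∧ d ∈ Concept.interp I C}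

open Classical in
/-- The map `ρ`, sending KB individuals to themselves and any other element to the fresh
element `w_{tp_I(d)}` indexed by its type. -/
noncomputable def rho (T : Finset Axiom) (A : Finset Assertion) (I : Interp U)
    (d : U) : U ⊕ Set Concept :=
  if d ∈ I.indI '' (kbInds T A : Set IndName) then Sum.inl d else Sum.inr (tp T I d)

/-- The image interpretation `J = ρ(I)`. -/
noncomputable def quotI (T : Finset Axiom) (A : Finset Assertion) (I : Interp U) :
    Interp (U ⊕ Set Concept) where
  dom := rho T A I '' I.dom
  indI := fun a => rho T A I (I.indI a)
  cI := fun X => rho T A I '' I.cI X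
  rI := fun r => (fun p : U × U => (rho T A I p.1, rho T A I p.2)) '' I.rI r
  cI_sub := fun X => Set.image_mono (I.cI_sub X)
  rI_sub := by
    rintro r p ⟨x, hx, rfl⟩
    exact ⟨Set.mem_image_of_mem _ (I.rI_sub r x hx).1,
      Set.mem_image_of_mem _ (I.rI_sub r x hx).2⟩


/-!
`ρ` only identifies elements of the same type, and every concept occurring in `T` lies in `𝒞`,
so an induction on concepts gives the truth lemma `ρ(d) ∈ C^J ↔ d ∈ C^I` for those concepts:
an atom, nominal or existential restriction satisfied in `J` at `ρ(d) = ρ(e)` is witnessed at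
`e` in `I`, hence holds at `d` because `tp_I(d) = tp_I(e)`.  So every violation of a concept
inclusion in `J` is the `ρ`-image of one in `I`.  The roles of `J` are images of those of `I`,
so violations of role inclusions in `J` are images of violations in `I` too, and assertions
true in `I` stay true in `J`.  Nothing here uses more of `ρ` than that it identifies only
elements of equal type.
-/

variable {V : Type}

def Interp.map (I : Interp U) (f : U → V) : Interp V where
  dom := f '' I.dom
  indI := f ∘ I.indI
  cI := fun X => f '' I.cI X
  rI := fun r => Prod.map f f '' I.rI r
  cI_sub := fun X => Set.image_mono (I.cI_sub X)
  rI_sub := by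
    rintro r _ ⟨p, hp, rfl⟩
    exact ⟨Set.mem_image_of_mem f (I.rI_sub r p hp).1,
      Set.mem_image_of_mem f (I.rI_sub r p hp).2⟩

lemma quotI_eq_map (T : Finset Axiom) (A : Finset Assertion) (I : Interp U) :
    quotI T A I = I.map (rho T A I) :=
  rfl

lemma Role.interp_subset_dom (I : Interp U) (r : Role) {p : U × U} (hp : p ∈ r.interp I) :
    p.1 ∈ I.dom ∧ p.2 ∈ I.dom := by
  cases r with
  | name s => exact I.rI_sub s p hp
  | inv s => exact (I.rI_sub s _ hp).symm

lemma Concept.interp_subset_dom (I : Interp U) (C : Concept) : C.interp I ⊆ I.dom := by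
  induction C with
  | top => exact subset_rfl
  | bot => exact Set.empty_subset _
  | atom X => exact I.cI_sub X
  | nom a => exact Set.inter_subset_right
  | neg C _ => exact Set.sdiff_subset
  | conj C D ihC _ => exact Set.inter_subset_left.trans ihC
  | ex r C _ => rintro d ⟨e, hde, -⟩; exact (r.interp_subset_dom I hde).1

lemma Role.interp_map (I : Interp U) (f : U → V) (r : Role) :
    r.interp (I.map f) = Prod.map f f '' r.interp I := by
  cases r with
  | name s => rfl
  | inv s =>
    ext ⟨x, y⟩
    simp only [Role.interp, Interp.map, Set.mem_ofPred_eq, Set.mem_image, Prod.exists,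
      Prod.map_apply, Prod.mk.injEq]
    exact ⟨fun ⟨a, b, hab, ha, hb⟩ => ⟨b, a, hab, hb, ha⟩,
      fun ⟨a, b, hab, ha, hb⟩ => ⟨b, a, hab, hb, ha⟩⟩

lemma Concept.mem_subc_self (C : Concept) : C ∈ C.subc := by
  cases C <;> simp [Concept.subc]

lemma Concept.subc_subset_of_mem {C D : Concept} (h : D ∈ C.subc) : D.subc ⊆ C.subc := by
  induction C with
  | neg C ih =>
    rcases Finset.mem_insert.1 h with rfl | h
    · exact subset_rfl
    · exact (ih h).trans (Finset.subset_insert _ _)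
  | conj C₁ C₂ ih₁ ih₂ =>
    rcases Finset.mem_insert.1 h with rfl | h
    · exact subset_rfl
    rcases Finset.mem_union.1 h with h | h
    · exact ((ih₁ h).trans Finset.subset_union_left).trans (Finset.subset_insert _ _)
    · exact ((ih₂ h).trans Finset.subset_union_right).trans (Finset.subset_insert _ _)
  | ex r C ih =>
    rcases Finset.mem_insert.1 h with rfl | h
    · exact subset_rfl
    · exact (ih h).trans (Finset.subset_insert _ _)
  | _ => rw [Finset.mem_singleton.1 h]

lemma mem_concepts_of_mem_subc {T : Finset Axiom} {C D : Concept}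
    (hC : C ∈ T.biUnion Axiom.concepts) (hD : D ∈ C.subc) :
    D ∈ T.biUnion Axiom.concepts := by
  obtain ⟨τ, hτ, hCτ⟩ := Finset.mem_biUnion.1 hC
  refine Finset.mem_biUnion.2 ⟨τ, hτ, ?_⟩
  cases τ with
  | ci C₁ C₂ =>
    simp only [Axiom.concepts, Finset.mem_union] at hCτ ⊢
    exact hCτ.imp (fun h => Concept.subc_subset_of_mem h hD)
      (fun h => Concept.subc_subset_of_mem h hD)
  | ri r s => simp [Axiom.concepts] at hCτ

lemma mem_interp_of_tp_eq {T : Finset Axiom} {I : Interp U} {d e : U} {C : Concept}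
    (hC : C ∈ clos T) (h : tp T I d = tp T I e) (he : e ∈ C.interp I) : d ∈ C.interp I :=
  (h.symm ▸ (⟨hC, he⟩ : C ∈ tp T I e) : C ∈ tp T I d).2

lemma vioRI_map_subset (I : Interp U) (f : U → V) (r s : Role) :
    vioRI (I.map f) r s ⊆ Prod.map f f '' vioRI I r s := by
  rintro _ ⟨hpr, hps⟩
  rw [Role.interp_map] at hpr hps
  obtain ⟨p, hp, rfl⟩ := hpr
  exact ⟨p, ⟨hp, fun hps' => hps ⟨p, hps', rfl⟩⟩, rfl⟩

lemma Assertion.sat_map (α : Assertion) (I : Interp U) (f : U → V) (h : α.sat I) :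
    α.sat (I.map f) := by
  cases α with
  | ca X a => exact Set.mem_image_of_mem f h
  | ra r a b => exact Set.mem_image_of_mem (Prod.map f f) h

section TypeRespectingMap

variable {T : Finset Axiom} {I : Interp U} {f : U → V}

lemma Concept.mem_interp_map_iff (hI : I.Proper)
    (hf : ∀ d e, f d = f e → tp T I d = tp T I e) {C : Concept}
    (hC : C ∈ T.biUnion Axiom.concepts) {d : U} (hd : d ∈ I.dom) :
    f d ∈ C.interp (I.map f) ↔ d ∈ C.interp I := by
  induction C generalizing d with
  | top => exact ⟨fun _ => hd, Set.mem_image_of_mem f⟩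
  | bot => exact Iff.rfl
  | atom X =>
    exact ⟨fun ⟨e, he, hed⟩ =>
      mem_interp_of_tp_eq (Finset.subset_union_left hC) (hf d e hed.symm) he,
      Set.mem_image_of_mem f⟩
  | nom a =>
    exact ⟨fun ⟨had, _⟩ =>
      mem_interp_of_tp_eq (Finset.subset_union_left hC) (hf d _ had) ⟨rfl, hI a⟩,
      fun ⟨had, _⟩ => ⟨congrArg f had, Set.mem_image_of_mem f hd⟩⟩
  | neg C ih =>
    have ih := @ih (mem_concepts_of_mem_subc hC (by simp [Concept.subc, Concept.mem_subc_self]))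
    simp only [Concept.interp, Set.mem_sdiff, ih hd]
    exact ⟨fun h => ⟨hd, h.2⟩, fun h => ⟨Set.mem_image_of_mem f hd, h.2⟩⟩
  | conj C₁ C₂ ih₁ ih₂ =>
    have ih₁ :=
      @ih₁ (mem_concepts_of_mem_subc hC (by simp [Concept.subc, Concept.mem_subc_self]))
    have ih₂ :=
      @ih₂ (mem_concepts_of_mem_subc hC (by simp [Concept.subc, Concept.mem_subc_self]))
    simp only [Concept.interp, Set.mem_inter_iff, ih₁ hd, ih₂ hd]
  | ex r C ih =>
    have ih := @ih (mem_concepts_of_mem_subc hC (by simp [Concept.subc, Concept.mem_subc_self]))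
    simp only [Concept.interp, Set.mem_ofPred_eq, Role.interp_map]
    constructor
    · rintro ⟨_, ⟨⟨a, b⟩, hab, hfab⟩, hbC⟩
      obtain ⟨hfa, rfl⟩ := Prod.mk.inj hfab
      have hb := (r.interp_subset_dom I hab).2
      exact mem_interp_of_tp_eq (Finset.subset_union_left hC) (hf d a hfa.symm)
        ⟨b, hab, (ih hb).1 hbC⟩
    · rintro ⟨e, hde, he⟩
      exact ⟨f e, ⟨(d, e), hde, rfl⟩, (ih (r.interp_subset_dom I hde).2).2 he⟩

lemma vioCI_map_subset (hI : I.Proper) (hf : ∀ d e, f d = f e → tp T I d = tp T I e)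
    {C D : Concept} (hC : C ∈ T.biUnion Axiom.concepts) (hD : D ∈ T.biUnion Axiom.concepts) :
    vioCI (I.map f) C D ⊆ f '' vioCI I C D := by
  rintro _ ⟨hxC, hxD⟩
  obtain ⟨d, hd, rfl⟩ := C.interp_subset_dom (I.map f) hxC
  exact ⟨d, ⟨(C.mem_interp_map_iff hI hf hC hd).1 hxC,
    fun hdD => hxD ((D.mem_interp_map_iff hI hf hD hd).2 hdD)⟩, rfl⟩

lemma Axiom.vioCount_map_le (hI : I.Proper) (hf : ∀ d e, f d = f e → tp T I d = tp T I e)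
    {τ : Axiom} (hτ : τ ∈ T) : τ.vioCount (I.map f) ≤ τ.vioCount I := by
  cases τ with
  | ci C D =>
    have mem : ∀ {E}, E ∈ (Axiom.ci C D).concepts → E ∈ T.biUnion Axiom.concepts :=
      fun hE => Finset.mem_biUnion.2 ⟨_, hτ, hE⟩
    have hC := mem (Finset.subset_union_left C.mem_subc_self)
    have hD := mem (Finset.subset_union_right D.mem_subc_self)
    exact (Set.encard_mono (vioCI_map_subset hI hf hC hD)).trans (Set.encard_image_le _ _)
  | ri r s =>
    exact (Set.encard_mono (vioRI_map_subset I f r s)).trans (Set.encard_image_le _ _)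

lemma cost_map_le (A : Finset Assertion) (wT : Axiom → ℕ∞) (wA : Assertion → ℕ∞)
    (hI : I.Proper) (hf : ∀ d e, f d = f e → tp T I d = tp T I e) :
    cost T A wT wA (I.map f) ≤ cost T A wT wA I := by
  refine add_le_add (Finset.sum_le_sum fun τ hτ => ?_) (Finset.sum_le_sum fun α _ => ?_)
  · exact mul_le_mul_right (Axiom.vioCount_map_le hI hf hτ) _
  · by_cases h : α.sat I
    · simp [h, α.sat_map I f h]
    · split <;> simp

end TypeRespectingMap

lemma tp_eq_of_rho_eq {T : Finset Axiom} {A : Finset Assertion} {I : Interp U} {d e : U}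
    (h : rho T A I d = rho T A I e) : tp T I d = tp T I e := by
  unfold rho at h
  split_ifs at h <;> simp_all

theorem statement4_general (T : Finset Axiom) (A : Finset Assertion)
    (wT : Axiom → ℕ∞) (wA : Assertion → ℕ∞)
    {U : Type} (I : Interp U) (hI : I.Proper) :
    cost T A wT wA (quotI T A I) ≤ cost T A wT wA I :=
  cost_map_le A wT wA hI fun _ _ => tp_eq_of_rho_eq

/-- The quotient construction does not increase cost:
`ω(ρ(I)) ≤ ω(I)`. -/
theorem statement4 (T : Finset Axiom) (A : Finset Assertion)
    (wT : Axiom → ℕ∞) (wA : Assertion → ℕ∞)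
    (hwT : ∀ τ ∈ T, 1 ≤ wT τ) (hwA : ∀ α ∈ A, 1 ≤ wA α)
    {U : Type} (I : Interp U) (hI : I.Proper) :
    cost T A wT wA (quotI T A I) ≤ cost T A wT wA I :=
  statement4_general T A wT wA I hI

end DL
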